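/- In the Hilbert space case p = 2 with X = H a Hilbert space, the history operator Θ : L_{2,ν}(ℝ;H) → L_{2,ν}(ℝ; L_2(ℝ_{<0};H)) satisfies ⟨Θx, Θx⟩ = (2ν)⁻¹ ⟨x, x⟩ for all x ∈ L_{2,ν}(ℝ;H); consequently Θ has closed range and √(2ν)·Θ is an isometry onto its range. -/

import Mathlib

/-!
Substituting `s = t + θ` turns the inner integral into `∫_{s<t} ‖x s‖²`, and Tonelli on the
half-plane `{s < t}` exchanges the order of integration, leaving
`∫ ‖x s‖² (∫_{t>s} e^{-2νt} dt) ds = (2ν)⁻¹ ∫ ‖x s‖² e^{-2νs} ds`.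
The computation is done with `ℝ≥0∞`-valued integrals, where Tonelli needs no integrability;
the `L_{2,ν}` hypothesis only makes both sides finite, so that the Bochner integrals agree with
them.
-/

open MeasureTheory Real Set
open scoped ENNReal

theorem lintegral_setLIntegral_Iio_mul {f w : ℝ → ℝ≥0∞} (hf : AEMeasurable f)
    (hw : Measurable w) :
    ∫⁻ t, (∫⁻ s in Iio t, f s) * w t = ∫⁻ s, f s * ∫⁻ t in Ioi s, w t := by
  set P : ℝ × ℝ → ℝ≥0∞ := {p | p.2 < p.1}.indicator fun p => f p.2 * w p.1
  have hP : AEMeasurable P (volume.prod volume) :=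
    ((hf.comp_quasiMeasurePreserving Measure.quasiMeasurePreserving_snd).mul
      (hw.comp measurable_fst).aemeasurable).indicator
      (measurableSet_lt measurable_snd measurable_fst)
  calc ∫⁻ t, (∫⁻ s in Iio t, f s) * w t
      = ∫⁻ t, ∫⁻ s, P (t, s) := by
        refine lintegral_congr fun t => ?_
        rw [← lintegral_indicator measurableSet_Iio,
          ← lintegral_mul_const'' _ (hf.indicator measurableSet_Iio)]
        refine lintegral_congr fun s => ?_
        by_cases hst : s < t <;> simp [P, hst]
    _ = ∫⁻ s, ∫⁻ t, P (t, s) := lintegral_lintegral_swap hP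
    _ = ∫⁻ s, f s * ∫⁻ t in Ioi s, w t := by
        refine lintegral_congr fun s => ?_
        rw [← lintegral_indicator measurableSet_Ioi,
          ← lintegral_const_mul _ (hw.indicator measurableSet_Ioi)]
        refine lintegral_congr fun t => ?_
        by_cases hst : s < t <;> simp [P, hst]

theorem setLIntegral_Ioi_ofReal_exp_neg_mul {c : ℝ} (hc : 0 < c) (s : ℝ) :
    ∫⁻ t in Ioi s, ENNReal.ofReal (exp (-c * t)) = ENNReal.ofReal (c⁻¹ * exp (-c * s)) := by
  rw [← ofReal_integral_eq_lintegral_ofReal (integrableOn_exp_mul_Ioi (by linarith) s)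
    (.of_forall fun t => (exp_pos _).le), integral_exp_mul_Ioi (by linarith)]
  congr 1
  field_simp

theorem lintegral_setLIntegral_Iio_mul_exp_neg_mul {f : ℝ → ℝ≥0∞} (hf : AEMeasurable f)
    {c : ℝ} (hc : 0 < c) :
    ∫⁻ t, (∫⁻ s in Iio t, f s) * ENNReal.ofReal (exp (-c * t))
      = ENNReal.ofReal c⁻¹ * ∫⁻ s, f s * ENNReal.ofReal (exp (-c * s)) := by
  have hfw : AEMeasurable fun s => f s * ENNReal.ofReal (exp (-c * s)) := hf.mul (by fun_prop)
  rw [lintegral_setLIntegral_Iio_mul hf (by fun_prop), ← lintegral_const_mul'' _ hfw]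
  refine lintegral_congr fun s => ?_
  rw [setLIntegral_Ioi_ofReal_exp_neg_mul hc, ENNReal.ofReal_mul (inv_nonneg.2 hc.le)]
  ring

theorem setLIntegral_Iio_zero_comp_const_add (f : ℝ → ℝ≥0∞) (t : ℝ) :
    ∫⁻ θ in Iio 0, f (t + θ) = ∫⁻ s in Iio t, f s := by
  simpa [image_const_add_Iio] using (measurePreserving_add_left volume t).setLIntegral_comp_emb
    (MeasurableEquiv.addLeft t).measurableEmbedding f (Iio 0)

theorem integral_setIntegral_Iio_zero_const_add_mul_exp_neg_mul {g : ℝ → ℝ} (hg : 0 ≤ g)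
    (hgm : AEStronglyMeasurable g) {c : ℝ} (hc : 0 < c)
    (hgi : Integrable fun t => g t * exp (-c * t)) :
    ∫ t, (∫ θ in Iio 0, g (t + θ)) * exp (-c * t) = c⁻¹ * ∫ t, g t * exp (-c * t) := by
  set K : ℝ → ℝ≥0∞ := fun t => ∫⁻ s in Iio t, ENNReal.ofReal (g s)
  set w : ℝ → ℝ≥0∞ := fun t => ENNReal.ofReal (exp (-c * t))
  have hK : Measurable K :=
    Monotone.measurable fun a b hab => lintegral_mono_set (Iio_subset_Iio hab)
  have hinner (t : ℝ) : ∫ θ in Iio 0, g (t + θ) = (K t).toReal := by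
    have hgt : AEStronglyMeasurable fun θ => g (t + θ) :=
      hgm.comp_measurePreserving (measurePreserving_add_left volume t)
    rw [integral_eq_lintegral_of_nonneg_ae (.of_forall fun θ => hg (t + θ)) hgt.restrict,
      setLIntegral_Iio_zero_comp_const_add (fun s => ENNReal.ofReal (g s))]
  have hI : ∫⁻ s, ENNReal.ofReal (g s) * w s = ENNReal.ofReal (∫ t, g t * exp (-c * t)) := by
    rw [ofReal_integral_eq_lintegral_ofReal hgi
      (.of_forall fun t => mul_nonneg (hg t) (exp_pos _).le)]
    exact lintegral_congr fun s => (ENNReal.ofReal_mul (hg s)).symm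
  have hJ :
      ∫⁻ t, K t * w t = ENNReal.ofReal c⁻¹ * ENNReal.ofReal (∫ t, g t * exp (-c * t)) := by
    rw [← hI]
    exact lintegral_setLIntegral_Iio_mul_exp_neg_mul hgm.aemeasurable.ennreal_ofReal hc
  have hKw : Measurable fun t => K t * w t := hK.mul (by fun_prop)
  have hfin : ∀ᵐ t, K t * w t < ∞ := ae_lt_top hKw (by simp [hJ, ENNReal.mul_eq_top])
  calc ∫ t, (∫ θ in Iio 0, g (t + θ)) * exp (-c * t)
      = ∫ t, (K t * w t).toReal := by
        simp [hinner, w, ENNReal.toReal_ofReal (exp_pos _).le]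
    _ = c⁻¹ * ∫ t, g t * exp (-c * t) := by
        rw [integral_toReal hKw.aemeasurable hfin, hJ, ← ENNReal.ofReal_mul
          (inv_nonneg.2 hc.le), ENNReal.toReal_ofReal (mul_nonneg (inv_nonneg.2 hc.le)
          (integral_nonneg fun t => mul_nonneg (hg t) (exp_pos _).le))]

/-- In the Hilbert space case (`p = 2`, `X = H`), the history
operator `Θ : L_{2,ν}(ℝ;H) → L_{2,ν}(ℝ;L_2(ℝ_{<0};H))` satisfies
`⟨Θx,Θx⟩ = (2ν)⁻¹⟨x,x⟩`, i.e., unfolding the inner products of the weighted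
Bochner–Lebesgue spaces,
`∫_ℝ (∫_{θ<0} ⟪x(t+θ),x(t+θ)⟫ dθ) e^{−2νt} dt = (2ν)⁻¹ ∫_ℝ ⟪x(t),x(t)⟫ e^{−2νt} dt`;
consequently `√(2ν)·Θ` is an isometry onto its range and `Θ` has closed range. -/
theorem stmt11
    {H : Type*} [NormedAddCommGroup H] [InnerProductSpace ℝ H]
    (ν : ℝ) (hν : 0 < ν)
    (x : ℝ → H)
    (hx : MemLp x 2 (volume.withDensity (fun t => ENNReal.ofReal (Real.exp (-2 * ν * t))))) :
    ∫ t, (∫ θ in Set.Iio (0 : ℝ), (inner ℝ (x (t + θ)) (x (t + θ)) : ℝ))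
        * Real.exp (-2 * ν * t)
      = (2 * ν)⁻¹ * ∫ t, (inner ℝ (x t) (x t) : ℝ) * Real.exp (-2 * ν * t) := by
  have hw : Measurable fun t : ℝ => ENNReal.ofReal (exp (-2 * ν * t)) := by fun_prop
  have hxm : AEStronglyMeasurable x :=
    hx.1.mono_ac <| withDensity_absolutelyContinuous' hw.aemeasurable
      (.of_forall fun t => by simp [exp_pos])
  have hxi : Integrable fun t => ‖x t‖ ^ 2 * exp (-(2 * ν) * t) := by
    simpa [ENNReal.toReal_ofReal (exp_pos _).le] using
      (integrable_withDensity_iff hw (.of_forall fun t => ENNReal.ofReal_lt_top)).1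
        (hx.integrable_norm_pow two_ne_zero)
  simp_rw [real_inner_self_eq_norm_sq]
  simpa only [neg_mul] using integral_setIntegral_Iio_zero_const_add_mul_exp_neg_mul
    (fun t => sq_nonneg ‖x t‖) (hxm.norm.pow 2) (by positivity) hxi
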